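/- Let d ≥ 2 and Λ ⊂ ℤ^d be finite. Let Ω^{2Λ^g} be the Grassmann algebra with generators {ψ_v, ψ̄_v : v ∈ Λ ∪ {g}}, where g is an extra ('ghost') symbol, and let Δ^g be the (Λ∪{g})×(Λ∪{g}) matrix with Δ^g(u,v) = Δ_Λ(u,v) for u,v ∈ Λ, Δ^g(u,g) = Δ^g(g,u) = |{w ∈ ∂^exΛ : w ∼ u}| for u ∈ Λ, and Δ^g(g,g) = −|∂^inΛ|. Then for every F in the subalgebra of Ω^{2Λ^g} generated by {ψ_v, ψ̄_v : v ∈ Λ}: (∏_{v∈Λ∪{g}} ∂_{ψ̄_v}∂_{ψ_v}) ψ_g ψ̄_g · exp(∑_{u,v∈Λ∪{g}} ψ_u (−Δ^g)(u,v) ψ̄_v + ψ_g ψ̄_g) · F = (∏_{v∈Λ} ∂_{ψ̄_v}∂_{ψ_v}) exp(∑_{u,v∈Λ} ψ_u (−Δ_Λ)(u,v) ψ̄_v) · F. That is, the pinned and the Dirichlet unnormalized fermionic Gaussian free field states agree on observables depending only on Λ. -/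

import Mathlib

/-!
Common setup: the hypercubic lattice ℤ^d, its Laplacian, Green's function, discrete
gradients; the Grassmann algebra with generators `ψ_v, ψ̄_v` indexed by lattice points
and a ghost vertex (`Option` with `none` = ghost), realized as an exterior algebra;
left derivatives as contractions; Berezin integrals; the (un)normalized Dirichlet
fermionic Gaussian free field state; fields X, Y; wired spanning trees; cumulants.
Products of (mathematically commuting) elements over a `Finset` are taken in the
arbitrary-but-fixed order provided by `Finset.toList`, and sums over collections that
are finite but not packaged as `Finset`s are `finsum`s.
-/

noncomputable section
open scoped BigOperators

namespace Sandpile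

variable (d : ℕ)

/-- Vertices of ℤ^d. -/
abbrev Vtx := Fin d → ℤ

/-- The `2d` coordinate directions `e_1,…,e_d,−e_1,…,−e_d`. -/
def Eo : Finset (Vtx d) :=
  (Finset.univ.image fun i : Fin d => Pi.single i (1 : ℤ)) ∪
    (Finset.univ.image fun i : Fin d => Pi.single i (-1 : ℤ))

/-- Nearest-neighbor adjacency in ℤ^d. -/
def adj (u v : Vtx d) : Prop := u - v ∈ Eo d

instance : DecidablePred fun p : Vtx d × Vtx d => adj d p.1 p.2 := fun _ => by
  unfold adj; infer_instance

instance (u v : Vtx d) : Decidable (adj d u v) := by unfold adj; infer_instance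

/-- Exterior boundary `∂^ex Λ`. -/
def extBdry (Λ : Finset (Vtx d)) : Set (Vtx d) :=
  {u | u ∉ Λ ∧ ∃ v ∈ Λ, adj d u v}

/-- Interior `Λ^in = Λ ∖ ∂^in Λ`: the points of `Λ` all of whose neighbors lie in `Λ`. -/
def interior (Λ : Finset (Vtx d)) : Set (Vtx d) :=
  {u | u ∈ Λ ∧ ∀ v, adj d u v → v ∈ Λ}

/-- The entries of `−Δ_Λ` (for `u, v` ranging over `Λ`): the matrix of the negative
Laplacian, `2d` on the diagonal, `−1` between nearest neighbors, `0` otherwise. -/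
def negLap (u v : Vtx d) : ℝ := if u = v then (2 * d : ℝ) else if adj d u v then -1 else 0

/-- The matrix `−Δ_Λ`. -/
def lapM (Λ : Finset (Vtx d)) : Matrix {x // x ∈ Λ} {x // x ∈ Λ} ℝ :=
  fun u v => negLap d u v

/-- The Green's function `G_Λ = (−Δ_Λ)⁻¹`, extended by `0` to ℤ^d × ℤ^d. -/
def green (Λ : Finset (Vtx d)) (u v : Vtx d) : ℝ :=
  if h : u ∈ Λ ∧ v ∈ Λ then (lapM d Λ)⁻¹ ⟨u, h.1⟩ ⟨v, h.2⟩ else 0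

/-- Discrete double gradient `∇^{(1)}_e ∇^{(2)}_{e'} G (u,v)`. -/
def dgrad (G : Vtx d → Vtx d → ℝ) (e e' u v : Vtx d) : ℝ :=
  G (u + e) (v + e') - G (u + e) v - G u (v + e') + G u v

/-- A good set: no two vertices are nearest neighbors, and every other site of `Λ` is
joined to `∂^ex Λ` by a nearest-neighbor path avoiding `V` (through `Λ^g`). -/
def goodSet (Λ V : Finset (Vtx d)) : Prop :=
  (∀ u ∈ V, ∀ v ∈ V, ¬adj d u v) ∧
    ∀ w ∈ Λ, w ∉ V →
      ∃ b ∈ extBdry d Λ,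
        (SimpleGraph.fromRel fun x y =>
            adj d x y ∧ (x ∈ (↑Λ : Set (Vtx d)) ∪ extBdry d Λ) ∧
              (y ∈ (↑Λ : Set (Vtx d)) ∪ extBdry d Λ) ∧ x ∉ V ∧ y ∉ V).Reachable w b

/-! ### The Grassmann algebra over `Λ ∪ {ghost}` -/

/-- Lattice vertices together with the ghost vertex (`none`). -/
abbrev GVtx := Option (Vtx d)

/-- The Grassmann algebra generated by `ψ_u` (`Sum.inl`) and `ψ̄_u` (`Sum.inr`). -/
abbrev GA := ExteriorAlgebra ℝ ((GVtx d ⊕ GVtx d) → ℝ)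

/-- The generator `ψ_u`. -/
def psi (u : GVtx d) : GA d := ExteriorAlgebra.ι ℝ (Pi.single (Sum.inl u) 1)

/-- The generator `ψ̄_u`. -/
def psibar (u : GVtx d) : GA d := ExteriorAlgebra.ι ℝ (Pi.single (Sum.inr u) 1)

/-- Left derivative w.r.t. the generator indexed by `x` (contraction with the
dual-basis functional). -/
def der (x : GVtx d ⊕ GVtx d) : Module.End ℝ (GA d) :=
  CliffordAlgebra.contractLeft (LinearMap.proj x)

/-- `∂_{ψ̄_u} ∂_{ψ_u}`. -/
def D (u : GVtx d) : Module.End ℝ (GA d) := der d (Sum.inr u) * der d (Sum.inl u)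

/-- The Berezin integral `∏_{u ∈ S} ∂_{ψ̄_u}∂_{ψ_u}`; the factors pairwise commute, so
the order (here the one provided by `Finset.toList`) is immaterial. -/
def berezin (S : Finset (GVtx d)) : Module.End ℝ (GA d) :=
  (S.toList.map fun u => D d u).prod

/-- `exp` of a Grassmann element: `∑_{k≥0} F^k/k!`, a finite sum for nilpotent `F`. -/
def gexp (F : GA d) : GA d := ∑ᶠ k : ℕ, (k.factorial : ℝ)⁻¹ • F ^ k

/-- The quadratic form `∑_{u,v ∈ Λ} ψ_u (−Δ_Λ)(u,v) ψ̄_v`. -/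
def dirQuad (Λ : Finset (Vtx d)) : GA d :=
  ∑ u ∈ Λ, ∑ v ∈ Λ, negLap d u v • (psi d (some u) * psibar d (some v))

/-- The unnormalized Dirichlet fGFF state, as an element of the Grassmann algebra. -/
def dstate (Λ : Finset (Vtx d)) (F : GA d) : GA d :=
  berezin d (Λ.image some) (gexp d (dirQuad d Λ) * F)

/-- The unnormalized Dirichlet fGFF state as a real number (the result of the full
Berezin integral is a scalar; `algebraMapInv` extracts it). -/
def dstateR (Λ : Finset (Vtx d)) (F : GA d) : ℝ :=
  ExteriorAlgebra.algebraMapInv (dstate d Λ F)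

/-- The normalized Dirichlet fGFF state `⟨⟨F⟩⟩_Λ = ⟨F⟩⁰_Λ / det(−Δ_Λ)`. -/
def nstate (Λ : Finset (Vtx d)) (F : GA d) : ℝ :=
  dstateR d Λ F / (lapM d Λ).det

/-- `∇_e ψ(v) = ψ_{v+e} − ψ_v`. -/
def gradPsi (v e : Vtx d) : GA d := psi d (some (v + e)) - psi d (some v)

/-- `∇_e ψ̄(v) = ψ̄_{v+e} − ψ̄_v`. -/
def gradPsibar (v e : Vtx d) : GA d := psibar d (some (v + e)) - psibar d (some v)

/-- The gradient-squared field `X_v = (2d)⁻¹ ∑_{e ∈ E_o} ∇_eψ(v) ∇_eψ̄(v)`. -/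
def X (v : Vtx d) : GA d :=
  (2 * d : ℝ)⁻¹ • ∑ e ∈ Eo d, gradPsi d v e * gradPsibar d v e

/-- The auxiliary field `Y_v = ∏_{e ∈ E_o} (1 − ∇_eψ(v) ∇_eψ̄(v))` (commuting factors,
taken in the `Finset.toList` order). -/
def Y (v : Vtx d) : GA d :=
  ((Eo d).toList.map fun e => 1 - gradPsi d v e * gradPsibar d v e).prod

/-- The product `∏_{v ∈ B} W_v` of (mathematically commuting) observables, taken in the
`Finset.toList` order. -/
def prodOver {α : Type*} (B : Finset α) (W : α → GA d) : GA d := (B.toList.map W).prod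

/-- Joint cumulants of the family `(W_v)_{v ∈ V}` with respect to the normalized
Dirichlet fGFF state. -/
def cumul (Λ V : Finset (Vtx d)) (W : Vtx d → GA d) : ℝ :=
  ∑ᶠ π : Finpartition V,
    ((π.parts.card - 1).factorial : ℝ) * (-1 : ℝ) ^ (π.parts.card - 1) *
      ∏ B ∈ π.parts, nstate d Λ (prodOver d B W)

/-! ### Wired spanning trees -/

/-- A wired spanning tree of `Λ`: a set of unordered nearest-neighbor edges, each with
an endpoint in `Λ`, of cardinality `|Λ|`, joining every vertex of `Λ` to `∂^ex Λ`. -/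
def IsWST (Λ : Finset (Vtx d)) (T : Finset (Sym2 (Vtx d))) : Prop :=
  (∀ e ∈ T, ∃ u v : Vtx d, e = s(u, v) ∧ adj d u v ∧ (u ∈ Λ ∨ v ∈ Λ)) ∧
    T.card = Λ.card ∧
      ∀ w ∈ Λ, ∃ b ∈ extBdry d Λ,
        (SimpleGraph.fromEdgeSet (↑T : Set (Sym2 (Vtx d)))).Reachable w b

/-- Probability of an event under the uniform measure on wired spanning trees. -/
def probWST (Λ : Finset (Vtx d)) (A : Finset (Sym2 (Vtx d)) → Prop) : ℝ :=
  ({T | IsWST d Λ T ∧ A T}.ncard : ℝ) / ({T | IsWST d Λ T}.ncard : ℝ)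

/-- Expectation under the uniform measure on wired spanning trees. -/
def expWST (Λ : Finset (Vtx d)) (φ : Finset (Sym2 (Vtx d)) → ℝ) : ℝ :=
  (∑ᶠ T ∈ {T | IsWST d Λ T}, φ T) / ({T | IsWST d Λ T}.ncard : ℝ)

/-- Joint cumulants of real observables under the uniform wired-spanning-tree measure. -/
def cumulWST (Λ V : Finset (Vtx d)) (W : Vtx d → Finset (Sym2 (Vtx d)) → ℝ) : ℝ :=
  ∑ᶠ π : Finpartition V,
    ((π.parts.card - 1).factorial : ℝ) * (-1 : ℝ) ^ (π.parts.card - 1) *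
      ∏ B ∈ π.parts, expWST d Λ fun T => ∏ v ∈ B, W v T

/-- The degree of `v` in the edge set `T`. -/
def degT (T : Finset (Sym2 (Vtx d))) (v : Vtx d) : ℕ := (T.filter fun e => v ∈ e).card

end Sandpile

namespace Sandpile

variable (d : ℕ)

/-- The number of neighbors of `u` lying in `∂^ex Λ`, i.e. `|{w ∈ ∂^ex Λ : w ∼ u}|`. -/
def extNbrCount (Λ : Finset (Vtx d)) (u : Vtx d) : ℕ :=
  ((((Eo d).image fun e => u + e)).filter fun w => w ∉ Λ).card

/-- The interior boundary `∂^in Λ`. -/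
def inBdry (Λ : Finset (Vtx d)) : Finset (Vtx d) :=
  Λ.filter fun u => ∃ e ∈ Eo d, u + e ∉ Λ

/-- The entries of `−Δ^g` over `Λ ∪ {g}` (`none` is the ghost `g`):
`Δ^g(u,v) = Δ_Λ(u,v)` on `Λ×Λ`, `Δ^g(u,g) = Δ^g(g,u) = |{w ∈ ∂^exΛ : w ∼ u}|`,
and `Δ^g(g,g) = −|∂^in Λ|`. -/
def negLapG (Λ : Finset (Vtx d)) : GVtx d → GVtx d → ℝ
  | some u, some v => negLap d u v
  | some u, none => -(extNbrCount d Λ u : ℝ)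
  | none, some v => -(extNbrCount d Λ v : ℝ)
  | none, none => (inBdry d Λ).card

/-- `Λ^g = Λ ∪ {g}`. -/
def wiredSet (Λ : Finset (Vtx d)) : Finset (GVtx d) := insert none (Λ.image some)

/-- The quadratic form `∑_{u,v ∈ Λ^g} ψ_u (−Δ^g)(u,v) ψ̄_v`. -/
def pinQuad (Λ : Finset (Vtx d)) : GA d :=
  ∑ u ∈ wiredSet d Λ, ∑ v ∈ wiredSet d Λ,
    negLapG d Λ u v • (psi d u * psibar d v)

/-- The unnormalized *pinned* fGFF state, as an element of the Grassmann algebra. -/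
def pstate (Λ : Finset (Vtx d)) (F : GA d) : GA d :=
  berezin d (wiredSet d Λ)
    (psi d none * psibar d none *
      gexp d (pinQuad d Λ + psi d none * psibar d none) * F)

end Sandpile

/-!
Put `P = ψ_g ψ̄_g`. Every bilinear `ψ_u ψ̄_v` is central in the Grassmann algebra, and `P`
annihilates each one that contains `ψ_g` or `ψ̄_g` (a generator squares to zero). Hence
`P (Q^g + P) = P Q_Λ` for the pinned and Dirichlet quadratic forms, and by nilpotency
`P exp(Q^g + P) = P exp(Q_Λ)`. The remaining factor `exp(Q_Λ) F` lies in the subalgebra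
generated by the lattice generators, on which the ghost derivatives vanish, so
`∂_{ψ̄_g} ∂_{ψ_g}` just removes `P` and what is left is the Dirichlet integral.
-/

theorem commute_mul_of_mul_eq_neg_mul {R : Type*} [Ring R] {a b c : R}
    (hab : a * b = -(b * a)) (hac : a * c = -(c * a)) : Commute a (b * c) := by
  show a * (b * c) = b * c * a
  rw [← mul_assoc, hab, neg_mul, mul_assoc, hac, mul_neg, neg_neg, mul_assoc]

theorem mul_pow_eq_mul_pow {R : Type*} [Monoid R] {P X Y : R} (hXY : P * X = P * Y)
    (hPY : Commute P Y) (k : ℕ) : P * X ^ k = P * Y ^ k := by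
  induction k with
  | zero => rw [pow_zero, pow_zero]
  | succ k ih =>
    calc P * X ^ (k + 1) = P * X * X ^ k := by rw [pow_succ', mul_assoc]
      _ = Y * (P * X ^ k) := by rw [hXY, hPY.eq, mul_assoc]
      _ = P * Y ^ (k + 1) := by rw [ih, ← mul_assoc, ← hPY.eq, pow_succ', mul_assoc]

namespace CliffordAlgebra

variable {R M : Type*} [CommRing R] [AddCommGroup M] [Module R M] {Q : QuadraticForm R M}

theorem contractLeft_eq_zero_of_mem_adjoin {f : Module.Dual R M} {S : Set (CliffordAlgebra Q)}
    (hS : S ⊆ ι Q '' LinearMap.ker f) {x : CliffordAlgebra Q} (hx : x ∈ Algebra.adjoin R S) :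
    contractLeft f x = 0 := by
  suffices ∀ b, contractLeft f b = 0 → contractLeft f (x * b) = 0 by
    simpa using this 1 (contractLeft_one (Q := Q) f)
  induction hx using Algebra.adjoin_induction with
  | mem z hz =>
    obtain ⟨m, hm, rfl⟩ := hS hz
    intro b hb
    rw [contractLeft_ι_mul, LinearMap.mem_ker.mp hm, zero_smul, hb, mul_zero, sub_zero]
  | algebraMap r =>
    intro b hb
    rw [contractLeft_algebraMap_mul, hb, mul_zero]
  | add y z _ _ hy hz =>
    intro b hb
    rw [add_mul, map_add, hy b hb, hz b hb, add_zero]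
  | mul y z _ _ hy hz =>
    intro b hb
    rw [mul_assoc]
    exact hy _ (hz b hb)

end CliffordAlgebra

namespace ExteriorAlgebra

variable {R M : Type*} [CommRing R] [AddCommGroup M] [Module R M]

theorem ι_mul_ι_eq_neg (x y : M) : ι R x * ι R y = -(ι R y * ι R x) :=
  CliffordAlgebra.ι_mul_ι_comm_of_isOrtho (.all x y)

theorem ι_mul_ι_mem_exteriorPower_two (x y : M) : ι R x * ι R y ∈ ⋀[R]^2 M := by
  rw [exteriorPower, pow_two]
  exact Submodule.mul_mem_mul ⟨x, rfl⟩ ⟨y, rfl⟩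

@[elab_as_elim]
theorem exteriorPower_two_induction {C : ExteriorAlgebra R M → Prop} {z : ExteriorAlgebra R M}
    (hz : z ∈ ⋀[R]^2 M) (ι_mul_ι : ∀ x y, C (ι R x * ι R y))
    (add : ∀ a b, C a → C b → C (a + b)) : C z := by
  rw [exteriorPower, pow_two] at hz
  refine Submodule.mul_induction_on hz ?_ add
  rintro _ ⟨x, rfl⟩ _ ⟨y, rfl⟩
  exact ι_mul_ι x y

theorem commute_of_mem_exteriorPower_two (a : ExteriorAlgebra R M) {z : ExteriorAlgebra R M}
    (hz : z ∈ ⋀[R]^2 M) : Commute a z := by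
  induction a using ExteriorAlgebra.induction with
  | algebraMap r => exact Algebra.commutes r z
  | ι x =>
    refine exteriorPower_two_induction hz (fun y w => ?_) fun _ _ => Commute.add_right
    exact commute_mul_of_mul_eq_neg_mul (ι_mul_ι_eq_neg x y) (ι_mul_ι_eq_neg x w)
  | mul a b ha hb => exact ha.mul_left hb
  | add a b ha hb => exact ha.add_left hb

theorem ι_mul_ι_mul_ι_mul_ι_eq_zero_left (x y w : M) : ι R x * ι R y * (ι R x * ι R w) = 0 := by
  rw [mul_assoc, (commute_of_mem_exteriorPower_two _ (ι_mul_ι_mem_exteriorPower_two x w)).eq,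
    ← mul_assoc, ← mul_assoc, ι_sq_zero, zero_mul, zero_mul]

theorem ι_mul_ι_mul_ι_mul_ι_eq_zero_right (x y w : M) : ι R x * ι R y * (ι R w * ι R y) = 0 := by
  rw [mul_assoc, (commute_of_mem_exteriorPower_two _ (ι_mul_ι_mem_exteriorPower_two w y)).eq,
    mul_assoc, ι_sq_zero, mul_zero, mul_zero]

theorem isNilpotent_of_mem_exteriorPower_two {z : ExteriorAlgebra R M} (hz : z ∈ ⋀[R]^2 M) :
    IsNilpotent z := by
  suffices z ∈ ⋀[R]^2 M ∧ IsNilpotent z from this.2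
  refine exteriorPower_two_induction hz (fun x y => ?_) fun a b ha hb => ?_
  · exact ⟨ι_mul_ι_mem_exteriorPower_two x y, 2, by
      rw [pow_two, ι_mul_ι_mul_ι_mul_ι_eq_zero_left]⟩
  · exact ⟨add_mem ha.1 hb.1,
      (commute_of_mem_exteriorPower_two a hb.1).isNilpotent_add ha.2 hb.2⟩

end ExteriorAlgebra

namespace Sandpile

open ExteriorAlgebra

variable (d : ℕ)

def siteSubalgebra (Λ : Finset (Vtx d)) : Subalgebra ℝ (GA d) :=
  Algebra.adjoin ℝ {x : GA d | ∃ v ∈ Λ, x = psi d (some v) ∨ x = psibar d (some v)}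

lemma psi_mul_psibar_mem_exteriorPower_two (u v : GVtx d) :
    psi d u * psibar d v ∈ ⋀[ℝ]^2 ((GVtx d ⊕ GVtx d) → ℝ) :=
  ι_mul_ι_mem_exteriorPower_two _ _

lemma dirQuad_mem_exteriorPower_two (Λ : Finset (Vtx d)) :
    dirQuad d Λ ∈ ⋀[ℝ]^2 ((GVtx d ⊕ GVtx d) → ℝ) :=
  Submodule.sum_mem _ fun _ _ => Submodule.sum_mem _ fun _ _ =>
    Submodule.smul_mem _ _ (psi_mul_psibar_mem_exteriorPower_two d _ _)

lemma pinQuad_mem_exteriorPower_two (Λ : Finset (Vtx d)) :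
    pinQuad d Λ ∈ ⋀[ℝ]^2 ((GVtx d ⊕ GVtx d) → ℝ) :=
  Submodule.sum_mem _ fun _ _ => Submodule.sum_mem _ fun _ _ =>
    Submodule.smul_mem _ _ (psi_mul_psibar_mem_exteriorPower_two d _ _)

lemma psi_mul_psibar_mem_siteSubalgebra {Λ : Finset (Vtx d)} {u v : Vtx d} (hu : u ∈ Λ)
    (hv : v ∈ Λ) : psi d (some u) * psibar d (some v) ∈ siteSubalgebra d Λ :=
  mul_mem (Algebra.subset_adjoin ⟨u, hu, Or.inl rfl⟩) (Algebra.subset_adjoin ⟨v, hv, Or.inr rfl⟩)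

lemma dirQuad_mem_siteSubalgebra (Λ : Finset (Vtx d)) : dirQuad d Λ ∈ siteSubalgebra d Λ :=
  Subalgebra.sum_mem _ fun _ hu => Subalgebra.sum_mem _ fun _ hv =>
    Subalgebra.smul_mem _ (psi_mul_psibar_mem_siteSubalgebra d hu hv) _

lemma gexp_eq_sum_range {X : GA d} {n : ℕ} (hX : X ^ n = 0) :
    gexp d X = ∑ k ∈ Finset.range n, (k.factorial : ℝ)⁻¹ • X ^ k := by
  refine finsum_eq_sum_of_support_subset _ fun k hk => ?_
  by_contra hkn
  exact hk (by dsimp only; rw [pow_eq_zero_of_le (by simpa using hkn) hX, smul_zero])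

lemma gexp_mem {A : Subalgebra ℝ (GA d)} {X : GA d} (hX : X ∈ A) (hnil : IsNilpotent X) :
    gexp d X ∈ A := by
  obtain ⟨n, hn⟩ := hnil
  rw [gexp_eq_sum_range d hn]
  exact Subalgebra.sum_mem _ fun k _ => Subalgebra.smul_mem _ (pow_mem hX k) _

lemma mul_gexp_eq_mul_gexp {P X Y : GA d} (hX : IsNilpotent X) (hY : IsNilpotent Y)
    (hXY : P * X = P * Y) (hPY : Commute P Y) : P * gexp d X = P * gexp d Y := by
  obtain ⟨m, hm⟩ := hX
  obtain ⟨n, hn⟩ := hY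
  rw [gexp_eq_sum_range d (pow_eq_zero_of_le (le_max_left m n) hm),
    gexp_eq_sum_range d (pow_eq_zero_of_le (le_max_right m n) hn), Finset.mul_sum, Finset.mul_sum]
  simp only [mul_smul_comm, mul_pow_eq_mul_pow hXY hPY]

lemma ghost_mul_pinQuad_add (Λ : Finset (Vtx d)) :
    psi d none * psibar d none * (pinQuad d Λ + psi d none * psibar d none) =
      psi d none * psibar d none * dirQuad d Λ := by
  have hkill : ∀ u v : GVtx d, u = none ∨ v = none →
      psi d none * psibar d none * (psi d u * psibar d v) = 0 := by
    rintro u v (rfl | rfl)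
    · exact ι_mul_ι_mul_ι_mul_ι_eq_zero_left _ _ _
    · exact ι_mul_ι_mul_ι_mul_ι_eq_zero_right _ _ _
  rw [mul_add, hkill none none (Or.inl rfl), add_zero, pinQuad, dirQuad, wiredSet]
  simp only [Finset.mul_sum, mul_smul_comm]
  simp [hkill, Finset.sum_image, negLapG]

lemma ghost_mul_gexp_pinQuad_add (Λ : Finset (Vtx d)) :
    psi d none * psibar d none * gexp d (pinQuad d Λ + psi d none * psibar d none) =
      psi d none * psibar d none * gexp d (dirQuad d Λ) :=
  mul_gexp_eq_mul_gexp d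
    (isNilpotent_of_mem_exteriorPower_two (add_mem (pinQuad_mem_exteriorPower_two d Λ)
      (psi_mul_psibar_mem_exteriorPower_two d none none)))
    (isNilpotent_of_mem_exteriorPower_two (dirQuad_mem_exteriorPower_two d Λ))
    (ghost_mul_pinQuad_add d Λ)
    (commute_of_mem_exteriorPower_two _ (dirQuad_mem_exteriorPower_two d Λ))

lemma der_eq_zero_of_mem_siteSubalgebra {Λ : Finset (Vtx d)} {x : GVtx d ⊕ GVtx d}
    (hx : ∀ v ∈ Λ, x ≠ .inl (some v) ∧ x ≠ .inr (some v)) {F : GA d}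
    (hF : F ∈ siteSubalgebra d Λ) : der d x F = 0 := by
  refine CliffordAlgebra.contractLeft_eq_zero_of_mem_adjoin ?_ hF
  rintro _ ⟨v, hv, rfl | rfl⟩
  · exact ⟨_, LinearMap.mem_ker.mpr (Pi.single_eq_of_ne (hx v hv).1 _), rfl⟩
  · exact ⟨_, LinearMap.mem_ker.mpr (Pi.single_eq_of_ne (hx v hv).2 _), rfl⟩

lemma D_psi_mul_psibar_mul (u : GVtx d) {G : GA d} (hG : der d (.inl u) G = 0)
    (hG' : der d (.inr u) G = 0) : D d u (psi d u * psibar d u * G) = G := by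
  have der_ι_mul : ∀ (x : GVtx d ⊕ GVtx d) (m : (GVtx d ⊕ GVtx d) → ℝ) (b : GA d),
      der d x (ι ℝ m * b) = m x • b - ι ℝ m * der d x b := fun x m b =>
    CliffordAlgebra.contractLeft_ι_mul (Q := (0 : QuadraticForm ℝ ((GVtx d ⊕ GVtx d) → ℝ)))
      (LinearMap.proj x) m b
  have hbar : der d (.inl u) (psibar d u * G) = 0 := by
    rw [psibar, der_ι_mul, hG, Pi.single_eq_of_ne Sum.inl_ne_inr, zero_smul, mul_zero, sub_zero]
  have hbar' : der d (.inr u) (psibar d u * G) = G := by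
    rw [psibar, der_ι_mul, hG', Pi.single_eq_same, one_smul, mul_zero, sub_zero]
  rw [D, Module.End.mul_apply, mul_assoc, psi, der_ι_mul, hbar, Pi.single_eq_same, one_smul,
    mul_zero, sub_zero, hbar']

lemma commute_D (u v : GVtx d) : Commute (D d u) (D d v) := by
  have hanti : ∀ x y, der d x * der d y = -(der d y * der d x) := fun x y =>
    LinearMap.ext (CliffordAlgebra.contractLeft_comm _ _)
  exact (commute_mul_of_mul_eq_neg_mul (hanti _ _) (hanti _ _)).mul_left
    (commute_mul_of_mul_eq_neg_mul (hanti _ _) (hanti _ _))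

lemma berezin_insert {u : GVtx d} {S : Finset (GVtx d)} (hu : u ∉ S) :
    berezin d (insert u S) = berezin d S * D d u := by
  have hperm : ((insert u S).toList.map (D d)).Perm (S.toList.map (D d) ++ [D d u]) := by
    simpa using ((Finset.toList_insert hu).map (D d)).trans (List.perm_append_singleton _ _).symm
  rw [berezin, berezin, hperm.prod_eq'
    (List.pairwise_map.mpr (List.pairwise_of_forall fun _ _ => commute_D d _ _)),
    List.prod_append, List.prod_singleton]

theorem pstate_eq_dstate (Λ : Finset (Vtx d)) (F : GA d)
    (hF : F ∈ Algebra.adjoin ℝ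
      {x : GA d | ∃ v ∈ Λ, x = psi d (some v) ∨ x = psibar d (some v)}) :
    pstate d Λ F = dstate d Λ F := by
  have hG : gexp d (dirQuad d Λ) * F ∈ siteSubalgebra d Λ :=
    mul_mem (gexp_mem d (dirQuad_mem_siteSubalgebra d Λ)
      (isNilpotent_of_mem_exteriorPower_two (dirQuad_mem_exteriorPower_two d Λ))) hF
  rw [pstate, wiredSet, berezin_insert d (by simp), Module.End.mul_apply,
    ghost_mul_gexp_pinQuad_add, mul_assoc,
    D_psi_mul_psibar_mul d none (der_eq_zero_of_mem_siteSubalgebra d (by simp) hG)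
      (der_eq_zero_of_mem_siteSubalgebra d (by simp) hG)]
  rfl

end Sandpile
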